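/- Let F : {-1,1}^M → {-1,1} be a Boolean function, let α ∈ [0,1], let z ∈ {-1,1}^M, and let p_1,…,p_M ∈ [0,α]. Let y ∈ {-1,1}^M be a random string whose i-th bit is independently −1 with probability p_i and +1 with probability 1 − p_i. Then the probability that F(z_1,…,z_M) ≠ F(z_1·y_1,…,z_M·y_M) is at most 2·α·bs_z(F). Equivalently, Σ_{y ∈ {-1,1}^M} (∏_{i : y_i = −1} p_i)·(∏_{i : y_i = 1} (1 − p_i))·[F(z) ≠ F(z·y)] ≤ 2·α·bs_z(F), where z·y denotes the coordinatewise product. -/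

import Mathlib

/-- The Boolean hypercube `{-1,1}^M` as a finite set of points in `ℝ^M`. -/
noncomputable def cube (M : ℕ) : Finset (Fin M → ℝ) :=
  Fintype.piFinset fun _ => ({1, -1} : Finset ℝ)

/-- `flipSet z S` negates the coordinates of `z` indexed by `S`. -/
def flipSet {M : ℕ} (z : Fin M → ℝ) (S : Finset (Fin M)) : Fin M → ℝ :=
  fun i => if i ∈ S then -z i else z i

/-- Block sensitivity of `F` at the point `z`: the maximum number of pairwise disjoint
blocks whose flipping changes the value of `F`. -/
noncomputable def bsAt {M : ℕ} (F : (Fin M → ℝ) → ℝ) (z : Fin M → ℝ) : ℕ :=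
  sSup {r : ℕ | ∃ S : Fin r → Finset (Fin M),
    (∀ i j, i ≠ j → Disjoint (S i) (S j)) ∧ ∀ i, F (flipSet z (S i)) ≠ F z}

/-! Let `k = ⌊α⁻¹⌋₊`, so that `k * p i ≤ 1`. Colour every coordinate independently, with
colour `j ∈ {1, …, k}` with probability `p i` each and left uncoloured otherwise. For each `j`
the set of `j`-coloured coordinates has the distribution of the flip set of `y`, and the `k`
colour classes are disjoint, so at most `bs_z(F)` of them are sensitive blocks. Averaging gives
`k * Pr[F z ≠ F (z * y)] ≤ bs_z(F)`, and `1 / k ≤ 2 * α`. When `α = 0` every `k` is admissible,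
so the probability vanishes. -/

section Bernoulli

variable {ι : Type*} [Fintype ι] [DecidableEq ι]

def bernoulliWeight (p : ι → ℝ) (S : Finset ι) : ℝ :=
  (∏ i ∈ S, p i) * ∏ i ∈ Sᶜ, (1 - p i)

theorem sum_prod_mul_preimage_eq_sum_bernoulliWeight {κ : Type*} [Fintype κ] [DecidableEq κ]
    (w : ι → κ → ℝ) (hw : ∀ i, ∑ x, w i x = 1) (c : κ) (g : Finset ι → ℝ) :
    ∑ L : ι → κ, (∏ i, w i (L i)) * g {i | L i = c} =
      ∑ S, bernoulliWeight (fun i => w i c) S * g S := by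
  rw [← Finset.sum_fiberwise Finset.univ fun L : ι → κ => ({i | L i = c} : Finset ι)]
  refine Finset.sum_congr rfl fun S _ => ?_
  have hfiber : ({L | ({i | L i = c} : Finset ι) = S} : Finset (ι → κ)) =
      Fintype.piFinset fun i => if i ∈ S then {c} else Finset.univ.erase c := by
    ext L
    simp only [Finset.mem_filter, Finset.mem_univ, true_and, Fintype.mem_piFinset,
      Finset.ext_iff]
    refine forall_congr' fun i => ?_
    split_ifs with hi <;> simp [hi]
  have hcoord : ∀ i, ∑ x ∈ (if i ∈ S then {c} else Finset.univ.erase c), w i x =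
      if i ∈ S then w i c else 1 - w i c := by
    intro i
    split_ifs
    · exact Finset.sum_singleton _ _
    · rw [Finset.sum_erase_eq_sub (Finset.mem_univ c), hw i]
  calc ∑ L : ι → κ with ({i | L i = c} : Finset ι) = S, (∏ i, w i (L i)) * g {i | L i = c}
      = (∑ L : ι → κ with ({i | L i = c} : Finset ι) = S, ∏ i, w i (L i)) * g S := by
        rw [Finset.sum_mul]
        exact Finset.sum_congr rfl fun L hL => by rw [(Finset.mem_filter.mp hL).2]
    _ = bernoulliWeight (fun i => w i c) S * g S := by
        rw [hfiber, ← Finset.prod_univ_sum, Fintype.prod_congr _ _ hcoord, Finset.prod_ite]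
        simp [bernoulliWeight, Finset.compl_eq_univ_sdiff, Finset.filter_not]

theorem sum_sum_bernoulliWeight_ite_le {κ : Type*} [Fintype κ] [DecidableEq κ]
    (w : ι → κ → ℝ) (hw0 : ∀ i x, 0 ≤ w i x) (hw1 : ∀ i, ∑ x, w i x = 1)
    (C : Finset κ) (P : Finset ι → Prop) [DecidablePred P] (b : ℕ)
    (hb : ∀ r (S : Fin r → Finset ι), (∀ j l, j ≠ l → Disjoint (S j) (S l)) →
      (∀ j, P (S j)) → r ≤ b) :
    ∑ c ∈ C, ∑ S, bernoulliWeight (fun i => w i c) S * (if P S then 1 else 0) ≤ b := by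
  have hcount : ∀ L : ι → κ, ∑ c ∈ C, (if P {i | L i = c} then (1 : ℝ) else 0) ≤ b := by
    intro L
    rw [Finset.sum_boole]
    set D := C.filter fun c => P {i | L i = c}
    have hD := hb D.card (fun j => {i | L i = D.equivFin.symm j}) ?_ ?_
    · exact_mod_cast hD
    · intro j l hjl
      refine Finset.disjoint_filter.mpr fun i _ hj hl => hjl ?_
      exact D.equivFin.symm.injective (Subtype.ext (hj.symm.trans hl))
    · exact fun j => (Finset.mem_filter.mp (D.equivFin.symm j).2).2
  calc ∑ c ∈ C, ∑ S, bernoulliWeight (fun i => w i c) S * (if P S then 1 else 0)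
      = ∑ L : ι → κ, (∏ i, w i (L i)) * ∑ c ∈ C, (if P {i | L i = c} then 1 else 0) := by
        simp_rw [← sum_prod_mul_preimage_eq_sum_bernoulliWeight w hw1, Finset.mul_sum]
        exact Finset.sum_comm
    _ ≤ ∑ L : ι → κ, (∏ i, w i (L i)) * b := by
        gcongr with L
        · exact Finset.prod_nonneg fun i _ => hw0 i (L i)
        · exact hcount L
    _ = b := by
        rw [← Finset.sum_mul, ← Fintype.prod_sum, Fintype.prod_congr _ _ hw1,
          Finset.prod_const_one, one_mul]

theorem nat_mul_sum_bernoulliWeight_ite_le (p : ι → ℝ) (k : ℕ) (hp0 : ∀ i, 0 ≤ p i)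
    (hpk : ∀ i, k * p i ≤ 1) (P : Finset ι → Prop) [DecidablePred P] (b : ℕ)
    (hb : ∀ r (S : Fin r → Finset ι), (∀ j l, j ≠ l → Disjoint (S j) (S l)) →
      (∀ j, P (S j)) → r ≤ b) :
    k * ∑ S, bernoulliWeight p S * (if P S then 1 else 0) ≤ b := by
  let w : ι → Option (Fin k) → ℝ := fun i x => x.elim (1 - k * p i) fun _ => p i
  have h := sum_sum_bernoulliWeight_ite_le w ?_ ?_ (Finset.univ.map .some) P b hb
  · simpa [w, Finset.sum_map] using h
  · rintro i (_ | _)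
    · simpa [w] using hpk i
    · exact hp0 i
  · intro i
    simp [w, Fintype.sum_option]

end Bernoulli

theorem flipSet_empty {M : ℕ} (z : Fin M → ℝ) : flipSet z ∅ = z := by
  funext i
  simp [flipSet]

theorem mul_flipSet_one {M : ℕ} (z : Fin M → ℝ) (S : Finset (Fin M)) :
    (fun i => z i * flipSet 1 S i) = flipSet z S := by
  funext i
  by_cases hi : i ∈ S <;> simp [flipSet, hi]

theorem le_bsAt {M : ℕ} (F : (Fin M → ℝ) → ℝ) (z : Fin M → ℝ) {r : ℕ}
    (S : Fin r → Finset (Fin M)) (hd : ∀ i j, i ≠ j → Disjoint (S i) (S j))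
    (hs : ∀ i, F (flipSet z (S i)) ≠ F z) : r ≤ bsAt F z := by
  refine le_csSup ⟨M, ?_⟩ ⟨S, hd, hs⟩
  rintro r ⟨S, hd, hs⟩
  have hne : ∀ i, (S i).Nonempty := fun i =>
    Finset.nonempty_iff_ne_empty.mpr fun h => hs i (by rw [h, flipSet_empty])
  calc r = ∑ _i : Fin r, 1 := by simp
    _ ≤ ∑ i, (S i).card := Finset.sum_le_sum fun i _ => (hne i).card_pos
    _ = (Finset.univ.biUnion S).card :=
        (Finset.card_biUnion fun i _ j _ hij => hd i j hij).symm
    _ ≤ M := (Finset.card_le_univ _).trans_eq (Fintype.card_fin M)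

theorem eq_one_or_eq_neg_one_of_mem_cube {M : ℕ} {y : Fin M → ℝ} (hy : y ∈ cube M)
    (i : Fin M) : y i = 1 ∨ y i = -1 := by
  simpa using Fintype.mem_piFinset.mp hy i

theorem flipSet_one_mem_cube {M : ℕ} (S : Finset (Fin M)) : flipSet 1 S ∈ cube M := by
  simp only [cube, Fintype.mem_piFinset, flipSet]
  intro i
  split_ifs <;> simp

theorem flipSet_one_filter_eq_neg_one {M : ℕ} {y : Fin M → ℝ} (hy : y ∈ cube M) :
    flipSet 1 {i | y i = -1} = y := by
  funext i
  rcases eq_one_or_eq_neg_one_of_mem_cube hy i with h | h <;> norm_num [flipSet, h]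

open Classical in
theorem sum_cube_eq_sum_bernoulliWeight {M : ℕ} (p : Fin M → ℝ) (G : (Fin M → ℝ) → ℝ) :
    ∑ y ∈ cube M, (∏ i ∈ Finset.univ.filter (fun i => y i = -1), p i) *
      (∏ i ∈ Finset.univ.filter (fun i => y i = 1), (1 - p i)) * G y =
    ∑ S, bernoulliWeight p S * G (flipSet 1 S) := by
  refine Finset.sum_nbij' (fun y => ({i | y i = -1} : Finset (Fin M))) (flipSet 1) (by simp)
    (fun S _ => flipSet_one_mem_cube S) (fun y hy => flipSet_one_filter_eq_neg_one hy) ?_ ?_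
  · intro S _
    ext i
    by_cases hi : i ∈ S <;> norm_num [flipSet, hi]
  · intro y hy
    rw [flipSet_one_filter_eq_neg_one hy, bernoulliWeight]
    congr 3
    ext i
    rcases eq_one_or_eq_neg_one_of_mem_cube hy i with h | h <;> norm_num [h]

theorem natFloor_inv_mul_le_one {α x : ℝ} (hx : 0 ≤ x) (hxα : x ≤ α) :
    (⌊α⁻¹⌋₊ : ℝ) * x ≤ 1 :=
  (mul_le_mul_of_nonneg_right (Nat.floor_le (inv_nonneg.mpr (hx.trans hxα))) hx).trans
    (inv_mul_le_one_of_le₀ hxα (hx.trans hxα))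

theorem one_le_natFloor_inv {α : ℝ} (hα0 : 0 < α) (hα1 : α ≤ 1) : 1 ≤ ⌊α⁻¹⌋₊ :=
  Nat.le_floor (by simpa using one_le_inv_iff₀.mpr ⟨hα0, hα1⟩)

theorem inv_natFloor_inv_le_two_mul {α : ℝ} (hα0 : 0 < α) (hα1 : α ≤ 1) :
    (⌊α⁻¹⌋₊ : ℝ)⁻¹ ≤ 2 * α := by
  have hk : (1 : ℝ) ≤ ⌊α⁻¹⌋₊ := by exact_mod_cast one_le_natFloor_inv hα0 hα1
  have hlt : α⁻¹ < ⌊α⁻¹⌋₊ + 1 := Nat.lt_floor_add_one _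
  rw [inv_le_iff_one_le_mul₀ (by positivity)]
  calc (1 : ℝ) = α * α⁻¹ := (mul_inv_cancel₀ hα0.ne').symm
    _ ≤ α * (2 * ⌊α⁻¹⌋₊) := by gcongr; linarith
    _ = _ := by ring

open Classical in
theorem stmt4_general {M : ℕ} (F : (Fin M → ℝ) → ℝ)
    (α : ℝ) (hα : α ∈ Set.Icc (0 : ℝ) 1)
    (z : Fin M → ℝ)
    (p : Fin M → ℝ) (hp : ∀ i, p i ∈ Set.Icc (0 : ℝ) α) :
    (∑ y ∈ cube M,
      (∏ i ∈ Finset.univ.filter (fun i => y i = -1), p i) *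
      (∏ i ∈ Finset.univ.filter (fun i => y i = 1), (1 - p i)) *
      (if F z ≠ F (fun i => z i * y i) then (1 : ℝ) else 0))
      ≤ 2 * α * (bsAt F z : ℝ) := by
  obtain ⟨hα0, hα1⟩ := hα
  rw [sum_cube_eq_sum_bernoulliWeight p fun y => if F z ≠ F (fun i => z i * y i) then 1 else 0]
  simp only [mul_flipSet_one]
  set prob := ∑ S, bernoulliWeight p S * if F z ≠ F (flipSet z S) then (1 : ℝ) else 0
  have hbound : ∀ k : ℕ, (∀ i, k * p i ≤ 1) → k * prob ≤ bsAt F z := fun k hk =>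
    nat_mul_sum_bernoulliWeight_ite_le p k (fun i => (hp i).1) hk _ _
      fun _ S hd hS => le_bsAt F z S hd fun j => (hS j).symm
  rcases hα0.eq_or_lt with rfl | hα_pos
  · have hprob : prob ≤ 0 := by
      by_contra! hpos
      obtain ⟨k, hk⟩ := exists_nat_gt ((bsAt F z : ℝ) / prob)
      have := hbound k fun i => by simp [le_antisymm (hp i).2 (hp i).1]
      rw [div_lt_iff₀ hpos] at hk
      linarith
    simpa using hprob
  · have hk : (0 : ℝ) < ⌊α⁻¹⌋₊ := by exact_mod_cast one_le_natFloor_inv hα_pos hα1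
    calc prob ≤ bsAt F z / ⌊α⁻¹⌋₊ := by
          rw [le_div_iff₀ hk, mul_comm]
          exact hbound _ fun i => natFloor_inv_mul_le_one (hp i).1 (hp i).2
      _ ≤ 2 * α * bsAt F z := by
          rw [div_eq_mul_inv, mul_comm]
          gcongr
          exact inv_natFloor_inv_le_two_mul hα_pos hα1

open Classical in
theorem stmt4 {M : ℕ} (F : (Fin M → ℝ) → ℝ)
    (hF : ∀ z ∈ cube M, F z = 1 ∨ F z = -1)
    (α : ℝ) (hα : α ∈ Set.Icc (0 : ℝ) 1)
    (z : Fin M → ℝ) (hz : z ∈ cube M)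
    (p : Fin M → ℝ) (hp : ∀ i, p i ∈ Set.Icc (0 : ℝ) α) :
    (∑ y ∈ cube M,
      (∏ i ∈ Finset.univ.filter (fun i => y i = -1), p i) *
      (∏ i ∈ Finset.univ.filter (fun i => y i = 1), (1 - p i)) *
      (if F z ≠ F (fun i => z i * y i) then (1 : ℝ) else 0))
      ≤ 2 * α * (bsAt F z : ℝ) :=
  stmt4_general F α hα z p hp
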